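/- Let n > 2 and let C be a binary projective two-weight linear code of length n − 1, dimension k − 1 and minimum distance d whose two nonzero weights are w1 = d and w2 = n − d. Then the extended code C̄ is a binary projective three-weight linear code of length n, dimension k and minimum distance d, its three nonzero weights are d, n − d and n, and A_n(C̄) = 1. -/
import Mathlib


/-- Hamming weight of a binary vector: the number of nonzero coordinates. -/
noncomputable def wt {ι : Type*} (c : ι → ZMod 2) : ℕ := Nat.card {i : ι // c i ≠ 0}

/-- Number of codewords of Hamming weight `w` in a set of binary vectors. -/
noncomputable def weightCount {ι : Type*} (C : Set (ι → ZMod 2)) (w : ℕ) : ℕ :=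
  Nat.card {c : ι → ZMod 2 // c ∈ C ∧ wt c = w}

/-- The dual code: all vectors orthogonal (standard inner product) to every codeword. -/
def dualCode {ι : Type*} (C : Set (ι → ZMod 2)) : Set (ι → ZMod 2) :=
  {x | ∀ c ∈ C, ∑ᶠ i, x i * c i = 0}

/-- A code is projective if the minimum distance of its dual is at least 3. -/
def IsProjective {ι : Type*} (C : Set (ι → ZMod 2)) : Prop :=
  ∀ x ∈ dualCode C, x ≠ 0 → 3 ≤ wt x

/-- `d` is the minimum distance of `C`: the least Hamming weight of a nonzero codeword. -/
def IsMinDist {ι : Type*} (C : Set (ι → ZMod 2)) (d : ℕ) : Prop :=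
  (∃ c ∈ C, c ≠ 0 ∧ wt c = d) ∧ ∀ c ∈ C, c ≠ 0 → d ≤ wt c

/-- The number of nonzero Hamming weights occurring among codewords of `C`. -/
noncomputable def numNonzeroWeights {ι : Type*} (C : Set (ι → ZMod 2)) : ℕ :=
  Nat.card {i : ℕ | 1 ≤ i ∧ weightCount C i ≠ 0}

/-- The codewords of weight `w` in `C` hold a 2-design with index `lam`: every pair of
distinct coordinate positions lies in the support of exactly `lam` codewords of weight `w`. -/
def HoldsTwoDesign {ι : Type*} (C : Set (ι → ZMod 2)) (w lam : ℕ) : Prop :=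
  ∀ p q : ι, p ≠ q →
    Nat.card {c : ι → ZMod 2 // c ∈ C ∧ wt c = w ∧ c p ≠ 0 ∧ c q ≠ 0} = lam

/-- The extended code of `C` (as a set): append an overall parity coordinate `0` to each
codeword and close up under adding the all-ones vector. -/
def extSet {N : ℕ} (C : Set (Fin N → ZMod 2)) : Set (Fin (N + 1) → ZMod 2) :=
  {x | ∃ c ∈ C, x = Fin.snoc c 0} ∪ {x | ∃ c ∈ C, x = (fun _ => 1) + Fin.snoc c 0}

/- ---------------- auxiliary lemmas ---------------- -/

lemma wt_eq_card {M : ℕ} (c : Fin M → ZMod 2) :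
    wt c = (Finset.univ.filter (fun i => c i ≠ 0)).card := by
  rw [wt, Nat.card_eq_fintype_card, Fintype.card_subtype]

lemma wt_le {M : ℕ} (c : Fin M → ZMod 2) : wt c ≤ M := by
  rw [wt_eq_card]
  simpa using Finset.card_filter_le Finset.univ (fun i => c i ≠ 0)

lemma wt_snoc {M : ℕ} (c : Fin M → ZMod 2) : wt (Fin.snoc c 0) = wt c := by
  rw [wt_eq_card, wt_eq_card, Finset.card_filter, Finset.card_filter,
    Fin.sum_univ_castSucc]
  simp

lemma wt_eq_zero_iff {M : ℕ} (c : Fin M → ZMod 2) : wt c = 0 ↔ c = 0 := by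
  rw [wt_eq_card, Finset.card_eq_zero, Finset.filter_eq_empty_iff]
  constructor
  · intro h; funext i; have := h (Finset.mem_univ i); simpa using this
  · intro h i _; simp [h]

lemma wt_one_add {M : ℕ} (x : Fin M → ZMod 2) :
    wt (((fun _ => 1) + x : Fin M → ZMod 2)) = M - wt x := by
  rw [wt_eq_card, wt_eq_card]
  have h1 : Finset.univ.filter (fun i => ((fun _ => (1:ZMod 2)) + x : Fin M → ZMod 2) i ≠ 0)
      = Finset.univ.filter (fun i => ¬ (x i ≠ 0)) := by
    apply Finset.filter_congr; intro i _
    have : ∀ a : ZMod 2, ((1 + a ≠ 0) ↔ ¬ (a ≠ 0)) := by decide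
    simpa using this (x i)
  rw [h1]
  have h2 := Finset.card_filter_add_card_filter_not
    (s := (Finset.univ : Finset (Fin M))) (p := fun i => x i ≠ 0)
  simp only [Finset.card_univ, Fintype.card_fin] at h2
  omega

lemma sum_eq_wt {M : ℕ} (x : Fin M → ZMod 2) : ∑ i, x i = (wt x : ZMod 2) := by
  rw [wt_eq_card, Finset.card_filter, Nat.cast_sum]
  apply Finset.sum_congr rfl
  intro i _
  by_cases h : x i = 0
  · simp [h]
  · simp [h]
    exact (by decide : ∀ a : ZMod 2, a ≠ 0 → a = 1) _ h

lemma weightCount_ne_zero_iff {M : ℕ} (S : Set (Fin M → ZMod 2)) (w : ℕ) :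
    weightCount S w ≠ 0 ↔ ∃ c ∈ S, wt c = w := by
  rw [weightCount, Nat.card_ne_zero]
  constructor
  · rintro ⟨⟨c, h1, h2⟩, -⟩; exact ⟨c, h1, h2⟩
  · rintro ⟨c, h1, h2⟩
    exact ⟨⟨⟨c, h1, h2⟩⟩, inferInstance⟩

def snocLM (M : ℕ) : (Fin M → ZMod 2) →ₗ[ZMod 2] (Fin (M+1) → ZMod 2) where
  toFun c := Fin.snoc c 0
  map_add' a b := by
    funext i
    refine Fin.lastCases ?_ ?_ i <;> simp
  map_smul' r a := by
    funext i
    refine Fin.lastCases ?_ ?_ i <;> simp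

@[simp] lemma snocLM_apply {M : ℕ} (c : Fin M → ZMod 2) :
    snocLM M c = Fin.snoc c 0 := rfl

lemma snocLM_inj (M : ℕ) : Function.Injective (snocLM M) := by
  intro a b h
  funext i
  have := congrFun h (Fin.castSucc i)
  simpa [snocLM] using this

lemma snoc_zero (M : ℕ) :
    (Fin.snoc (0 : Fin M → ZMod 2) (0 : ZMod 2)) = (0 : Fin (M+1) → ZMod 2) := by
  funext i
  refine Fin.lastCases ?_ ?_ i <;> simp

lemma wt_allones (M : ℕ) : wt (fun _ : Fin M => (1 : ZMod 2)) = M := by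
  rw [wt_eq_card]
  simp

lemma wt_castSucc {M : ℕ} (x : Fin (M+1) → ZMod 2) :
    wt x = wt (fun i => x (Fin.castSucc i)) + (if x (Fin.last M) ≠ 0 then 1 else 0) := by
  rw [wt_eq_card, wt_eq_card, Finset.card_filter, Finset.card_filter,
    Fin.sum_univ_castSucc]

theorem extended_two_weight_is_three_weight (N k₀ d : ℕ) (hn : 2 < N + 1)
    (C : Submodule (ZMod 2) (Fin N → ZMod 2))
    (hk : Module.finrank (ZMod 2) C = k₀)
    (hd : IsMinDist (C : Set (Fin N → ZMod 2)) d)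
    (hproj : IsProjective (C : Set (Fin N → ZMod 2)))
    (h2 : numNonzeroWeights (C : Set (Fin N → ZMod 2)) = 2)
    (hw : {i : ℕ | 1 ≤ i ∧ weightCount (C : Set (Fin N → ZMod 2)) i ≠ 0} =
      {d, (N + 1) - d}) :
    ∃ Cb : Submodule (ZMod 2) (Fin (N + 1) → ZMod 2),
      (Cb : Set (Fin (N + 1) → ZMod 2)) = extSet (C : Set (Fin N → ZMod 2)) ∧
      Module.finrank (ZMod 2) Cb = k₀ + 1 ∧
      IsMinDist (Cb : Set (Fin (N + 1) → ZMod 2)) d ∧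
      IsProjective (Cb : Set (Fin (N + 1) → ZMod 2)) ∧
      numNonzeroWeights (Cb : Set (Fin (N + 1) → ZMod 2)) = 3 ∧
      {i : ℕ | 1 ≤ i ∧ weightCount (Cb : Set (Fin (N + 1) → ZMod 2)) i ≠ 0} =
        {d, (N + 1) - d, N + 1} ∧
      weightCount (Cb : Set (Fin (N + 1) → ZMod 2)) (N + 1) = 1 := by
  classical
  obtain ⟨⟨c₀, hc₀C, hc₀ne, hc₀wt⟩, hdle⟩ := hd
  have hwtne : ∀ c : Fin N → ZMod 2, c ≠ 0 → 1 ≤ wt c := by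
    intro c hc
    have : wt c ≠ 0 := fun h => hc ((wt_eq_zero_iff c).mp h)
    omega
  have hd1 : 1 ≤ d := hc₀wt ▸ hwtne c₀ hc₀ne
  -- there is a codeword of weight N+1-d
  have he : (N+1-d) ∈ {i : ℕ | 1 ≤ i ∧ weightCount (C : Set (Fin N → ZMod 2)) i ≠ 0} := by
    rw [hw]; exact Set.mem_insert_of_mem _ rfl
  obtain ⟨he1, he2⟩ := he
  obtain ⟨c₁, hc₁C, hc₁wt⟩ := (weightCount_ne_zero_iff _ _).mp he2
  have hc₁ne : c₁ ≠ 0 := by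
    intro h
    rw [h, (wt_eq_zero_iff (0 : Fin N → ZMod 2)).mpr rfl] at hc₁wt
    omega
  have hdle2 : d ≤ N + 1 - d := hc₁wt ▸ hdle c₁ hc₁C hc₁ne
  have hdne : d ≠ N + 1 - d := by
    intro h
    rw [numNonzeroWeights, hw, ← h] at h2
    rw [Nat.card_coe_set_eq, Set.pair_eq_singleton, Set.ncard_singleton] at h2
    omega
  have harith : 1 ≤ d ∧ d < N + 1 - d ∧ N + 1 - d ≤ N ∧ d ≤ N := by omega
  -- weights of nonzero codewords of C
  have hclass : ∀ c, c ∈ C → c ≠ 0 → wt c = d ∨ wt c = N + 1 - d := by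
    intro c hc hne
    have : wt c ∈ ({d, N + 1 - d} : Set ℕ) := by
      rw [← hw]
      exact ⟨hwtne c hne, (weightCount_ne_zero_iff _ _).mpr ⟨c, hc, rfl⟩⟩
    simpa using this
  set ones : Fin (N+1) → ZMod 2 := (fun _ => 1) with hones_def
  set Cb : Submodule (ZMod 2) (Fin (N+1) → ZMod 2) :=
    C.map (snocLM N) ⊔ Submodule.span (ZMod 2) {ones} with hCb_def
  have hmem : ∀ x, x ∈ Cb ↔
      ((∃ c ∈ C, x = Fin.snoc c 0) ∨ ∃ c ∈ C, x = ones + Fin.snoc c 0) := by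
    intro x
    rw [hCb_def, Submodule.mem_sup]
    constructor
    · rintro ⟨y, hy, z, hz, rfl⟩
      obtain ⟨c, hc, rfl⟩ := Submodule.mem_map.mp hy
      obtain ⟨a, rfl⟩ := Submodule.mem_span_singleton.mp hz
      rcases (by decide : ∀ a : ZMod 2, a = 0 ∨ a = 1) a with h | h
      · left; exact ⟨c, hc, by simp [h]⟩
      · right; exact ⟨c, hc, by simp [h, add_comm]⟩
    · rintro (⟨c, hc, rfl⟩ | ⟨c, hc, rfl⟩)
      · exact ⟨Fin.snoc c 0, Submodule.mem_map.mpr ⟨c, hc, rfl⟩, 0,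
          Submodule.zero_mem _, add_zero (Fin.snoc c 0 : Fin (N+1) → ZMod 2)⟩
      · exact ⟨Fin.snoc c 0, Submodule.mem_map.mpr ⟨c, hc, rfl⟩, ones,
          Submodule.mem_span_singleton_self _, add_comm _ _⟩
  have hset : (Cb : Set (Fin (N + 1) → ZMod 2)) = extSet (C : Set (Fin N → ZMod 2)) := by
    ext x
    rw [SetLike.mem_coe, hmem]
    rfl
  have honesne : ones ≠ 0 := by
    intro h
    have := congrFun h ⟨0, by omega⟩
    simp [hones_def] at this
  have honesmem : ones ∈ Cb := by
    rw [hmem]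
    right
    exact ⟨0, C.zero_mem, by rw [snoc_zero, add_zero]⟩
  -- finrank
  have hrank : Module.finrank (ZMod 2) Cb = k₀ + 1 := by
    have hinf : C.map (snocLM N) ⊓ Submodule.span (ZMod 2) {ones} = ⊥ := by
      rw [eq_bot_iff]
      rintro x hx
      obtain ⟨hx1, hx2⟩ := Submodule.mem_inf.mp hx
      obtain ⟨a, rfl⟩ := Submodule.mem_span_singleton.mp hx2
      rcases (by decide : ∀ a : ZMod 2, a = 0 ∨ a = 1) a with h | h
      · simp [h]
      · exfalso
        obtain ⟨c, hc, hceq⟩ := Submodule.mem_map.mp hx1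
        have := congrFun hceq (Fin.last N)
        simp [h, hones_def, Fin.snoc_last] at this
    have h1 : Module.finrank (ZMod 2) (C.map (snocLM N)) = k₀ := by
      rw [← hk]
      exact (Submodule.equivMapOfInjective (snocLM N) (snocLM_inj N) C).finrank_eq.symm
    have h2' : Module.finrank (ZMod 2) (Submodule.span (ZMod 2) {ones}) = 1 :=
      finrank_span_singleton honesne
    have h3 := Submodule.finrank_sup_add_finrank_inf_eq (C.map (snocLM N))
      (Submodule.span (ZMod 2) {ones})
    rw [hinf, h1, h2', finrank_bot] at h3
    rw [hCb_def]
    omega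
  -- classification of weights of nonzero codewords of Cb
  have hclassb : ∀ x, x ∈ Cb → x ≠ 0 →
      wt x = d ∨ wt x = N + 1 - d ∨ wt x = N + 1 := by
    intro x hxC hxne
    rcases (hmem x).mp hxC with ⟨c, hc, rfl⟩ | ⟨c, hc, rfl⟩
    · have hcne : c ≠ 0 := by
        rintro rfl
        exact hxne (snoc_zero N)
      rcases hclass c hc hcne with h | h
      · left; rw [wt_snoc, h]
      · right; left; rw [wt_snoc, h]
    · rw [wt_one_add, wt_snoc]
      by_cases hc0 : c = 0
      · right; right
        rw [hc0, (wt_eq_zero_iff (0 : Fin N → ZMod 2)).mpr rfl]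
        omega
      · have hle := wt_le c
        rcases hclass c hc hc0 with h | h
        · right; left; omega
        · left; omega
  -- min dist of Cb
  have hmd : IsMinDist (Cb : Set (Fin (N + 1) → ZMod 2)) d := by
    constructor
    · refine ⟨Fin.snoc c₀ 0, (hmem _).mpr (Or.inl ⟨c₀, hc₀C, rfl⟩), ?_, ?_⟩
      · intro h
        have : wt (Fin.snoc c₀ (0 : ZMod 2)) = 0 := (wt_eq_zero_iff _).mpr h
        rw [wt_snoc, hc₀wt] at this
        omega
      · rw [wt_snoc, hc₀wt]
    · intro x hx hxne
      rcases hclassb x hx hxne with h | h | h <;> omega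
  -- projectivity of Cb
  have hpb : IsProjective (Cb : Set (Fin (N + 1) → ZMod 2)) := by
    intro x hx hxne
    have hpar : (wt x : ZMod 2) = 0 := by
      have h := hx ones honesmem
      rw [finsum_eq_sum_of_fintype] at h
      simp only [hones_def, mul_one] at h
      rwa [sum_eq_wt] at h
    have hx0 : wt x ≠ 0 := fun h => hxne ((wt_eq_zero_iff x).mp h)
    have hdvd : 2 ∣ wt x := by
      rwa [ZMod.natCast_eq_zero_iff] at hpar
    by_contra hlt
    push_neg at hlt
    have hwx2 : wt x = 2 := by omega
    set x' : Fin N → ZMod 2 := fun i => x (Fin.castSucc i) with hx'def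
    have hx'dual : x' ∈ dualCode (C : Set (Fin N → ZMod 2)) := by
      intro c hc
      have h := hx (Fin.snoc c 0) ((hmem _).mpr (Or.inl ⟨c, hc, rfl⟩))
      rw [finsum_eq_sum_of_fintype, Fin.sum_univ_castSucc] at h
      rw [finsum_eq_sum_of_fintype]
      simpa using h
    have hrel := wt_castSucc x
    have hbit : (if x (Fin.last N) ≠ 0 then 1 else 0) ≤ 1 := by
      split <;> omega
    have hx'wt : 1 ≤ wt x' ∧ wt x' ≤ 2 := by
      rw [← hx'def] at hrel
      omega
    have hx'ne : x' ≠ 0 := by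
      intro h
      have := (wt_eq_zero_iff x').mpr h
      omega
    have := hproj x' hx'dual hx'ne
    omega
  -- weight set of Cb
  have hseteq : {i : ℕ | 1 ≤ i ∧ weightCount (Cb : Set (Fin (N + 1) → ZMod 2)) i ≠ 0} =
      {d, (N + 1) - d, N + 1} := by
    ext i
    simp only [Set.mem_setOf_eq, Set.mem_insert_iff, Set.mem_singleton_iff]
    constructor
    · rintro ⟨h1, h2⟩
      obtain ⟨x, hxC, hxwt⟩ := (weightCount_ne_zero_iff _ _).mp h2
      have hxne : x ≠ 0 := by
        intro h
        rw [h, (wt_eq_zero_iff (0 : Fin (N+1) → ZMod 2)).mpr rfl] at hxwt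
        omega
      rcases hclassb x hxC hxne with h | h | h <;> omega
    · rintro (rfl | rfl | rfl)
      · refine ⟨hd1, (weightCount_ne_zero_iff _ _).mpr
          ⟨Fin.snoc c₀ 0, (hmem _).mpr (Or.inl ⟨c₀, hc₀C, rfl⟩), ?_⟩⟩
        rw [wt_snoc, hc₀wt]
      · refine ⟨he1, (weightCount_ne_zero_iff _ _).mpr
          ⟨ones + Fin.snoc c₀ 0, (hmem _).mpr (Or.inr ⟨c₀, hc₀C, rfl⟩), ?_⟩⟩
        rw [hones_def, wt_one_add, wt_snoc, hc₀wt]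
      · refine ⟨by omega, (weightCount_ne_zero_iff _ _).mpr ⟨ones, honesmem, ?_⟩⟩
        rw [hones_def, wt_allones]
  -- number of nonzero weights
  have hnum : numNonzeroWeights (Cb : Set (Fin (N + 1) → ZMod 2)) = 3 := by
    rw [numNonzeroWeights, hseteq, Nat.card_coe_set_eq,
      Set.ncard_insert_of_notMem (by simp; omega),
      Set.ncard_pair (by omega)]
  -- weightCount at N+1
  have hcount : weightCount (Cb : Set (Fin (N + 1) → ZMod 2)) (N + 1) = 1 := by
    have huniq : ∀ x, x ∈ Cb → wt x = N + 1 → x = ones := by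
      intro x hxC hxwt
      rcases (hmem x).mp hxC with ⟨c, hc, rfl⟩ | ⟨c, hc, rfl⟩
      · exfalso
        rw [wt_snoc] at hxwt
        have := wt_le c
        omega
      · rw [wt_one_add, wt_snoc] at hxwt
        have hc0 : wt c = 0 := by omega
        rw [(wt_eq_zero_iff c).mp hc0, snoc_zero, add_zero]
    rw [weightCount, Nat.card_eq_one_iff_unique]
    constructor
    · constructor
      intro a b
      apply Subtype.ext
      rw [huniq a.1 a.2.1 a.2.2, huniq b.1 b.2.1 b.2.2]
    · exact ⟨⟨ones, honesmem, by rw [hones_def, wt_allones]⟩⟩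
  exact ⟨Cb, hset, hrank, hmd, hpb, hnum, hseteq, hcount⟩
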